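/- arXiv:2207.12845 — 6 statements merged into one kernel-verified Lean document; each statement's English description precedes it below -/
import Mathlib

section
/- If f : ℝᵐ → ℝ is μ-strongly convex and differentiable, and A : ℝⁿ → ℝᵐ is a linear map, then g(x) = f(Ax) satisfies the Polyak-Łojasiewicz inequality on the affine set range-restricted problem: there exists μ_g > 0 such that (1/2)‖∇g(x)‖² ≥ μ_g (g(x) − g*) for all x, where g* = inf g, provided g attains its infimum. -/
/-!
Write `g = f ∘ A`. Strong convexity of `f` at `A x` bounds `g x - g y` by
`f'(A x) (A (y - x)) - μ/2 ‖A (y - x)‖²`. The derivative term only sees `A (y - x)`, so `y - x`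
may be replaced by a preimage `w` of it with `‖w‖ ≤ C ‖A (y - x)‖`, which exists in finite
dimension by the open mapping theorem applied to `A` onto its range; then it equals `⟪∇g x, w⟫`
and is at most `C ‖∇g x‖ ‖A (y - x)‖`. Maximising the resulting quadratic in `‖A (y - x)‖` gives
`g x - g y ≤ C² ‖∇g x‖² / (2μ)`, i.e. the PL inequality with `μ_g = μ / C²`.
-/

open Set

theorem ConvexOn.add_le_of_hasFDerivAt {E : Type*} [NormedAddCommGroup E] [NormedSpace ℝ E]
    {h : E → ℝ} {h' : E →L[ℝ] ℝ} {x : E} (hc : ConvexOn ℝ univ h) (hd : HasFDerivAt h h' x)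
    (y : E) : h x + h' (y - x) ≤ h y := by
  let ℓ : ℝ →ᵃ[ℝ] E := AffineMap.lineMap x y
  have hderiv : HasDerivAt (h ∘ ℓ) (h' (y - x)) 0 := by
    refine HasFDerivAt.comp_hasDerivAt (0 : ℝ) ?_ AffineMap.hasDerivAt_lineMap
    rwa [AffineMap.lineMap_apply_zero]
  have := (hc.comp_affineMap ℓ).le_slope_of_hasDerivAt (mem_univ 0) (mem_univ 1) one_pos hderiv
  simp only [slope_def_field, Function.comp_apply, ℓ, AffineMap.lineMap_apply_one,
    AffineMap.lineMap_apply_zero, sub_zero, div_one] at this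
  linarith

theorem StrongConvexOn.add_le_of_hasFDerivAt {F : Type*} [NormedAddCommGroup F]
    [InnerProductSpace ℝ F] {f : F → ℝ} {f' : F →L[ℝ] ℝ} {μ : ℝ} {u : F}
    (hf : StrongConvexOn univ μ f) (hd : HasFDerivAt f f' u) (v : F) :
    f u + f' (v - u) + μ / 2 * ‖v - u‖ ^ 2 ≤ f v := by
  have hsq : HasFDerivAt (fun y : F ↦ μ / 2 * ‖y‖ ^ 2) ((μ / 2) • (2 • innerSL ℝ u)) u :=
    (hasStrictFDerivAt_norm_sq u).hasFDerivAt.const_smul (μ / 2)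
  have := (strongConvexOn_iff_convex.mp hf).add_le_of_hasFDerivAt (hd.sub hsq) v
  simp only [sub_apply, smul_apply, innerSL_apply_apply, smul_eq_mul, nsmul_eq_mul,
    Nat.cast_ofNat, inner_sub_right, real_inner_self_eq_norm_sq] at this
  rw [norm_sub_sq_real, real_inner_comm]
  linarith

theorem LinearMap.exists_preimage_norm_le_of_mem_range {E F : Type*} [NormedAddCommGroup E]
    [NormedSpace ℝ E] [FiniteDimensional ℝ E] [NormedAddCommGroup F] [NormedSpace ℝ F]
    (A : E →ₗ[ℝ] F) : ∃ C > 0, ∀ y ∈ range A, ∃ x, A x = y ∧ ‖x‖ ≤ C * ‖y‖ := by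
  obtain ⟨C, hC, hpre⟩ := (LinearMap.toContinuousLinearMap A.rangeRestrict).exists_preimage_norm_le
    A.surjective_rangeRestrict
  refine ⟨C, hC, fun y hy ↦ ?_⟩
  obtain ⟨x, hx, hxC⟩ := hpre ⟨y, hy⟩
  exact ⟨x, congrArg Subtype.val hx, hxC⟩

theorem StrongConvexOn.mul_sub_le_half_norm_gradient_comp_sq {E F : Type*}
    [NormedAddCommGroup E] [InnerProductSpace ℝ E] [FiniteDimensional ℝ E]
    [NormedAddCommGroup F] [InnerProductSpace ℝ F] {f : F → ℝ} {μ C : ℝ} {A : E →ₗ[ℝ] F}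
    (hf : StrongConvexOn univ μ f) (hμ : 0 < μ) (hC : 0 < C)
    (hA : ∀ y ∈ range A, ∃ x, A x = y ∧ ‖x‖ ≤ C * ‖y‖) {x : E} (hd : DifferentiableAt ℝ f (A x))
    (y : E) : μ / C ^ 2 * (f (A x) - f (A y)) ≤ 1 / 2 * ‖gradient (fun z ↦ f (A z)) x‖ ^ 2 := by
  set p := gradient (fun z ↦ f (A z)) x
  set s := ‖A (y - x)‖
  have hchain : ∀ v, fderiv ℝ (fun z ↦ f (A z)) x v = fderiv ℝ f (A x) (A v) := fun v ↦
    congrArg (· v) (hd.hasFDerivAt.comp x (LinearMap.toContinuousLinearMap A).hasFDerivAt).fderiv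
  obtain ⟨w, hw, hwC⟩ := hA _ (LinearMap.mem_range_self A (y - x))
  have hstep : fderiv ℝ f (A x) (A (y - x)) = inner ℝ p w := by
    rw [inner_gradient_left, hchain, hw]
  have hinner : -(‖p‖ * (C * s)) ≤ inner ℝ p w :=
    calc -(‖p‖ * (C * s)) ≤ -(‖p‖ * ‖w‖) := by gcongr
      _ ≤ inner ℝ p w := neg_le_of_abs_le (abs_real_inner_le_norm p w)
  have hgap : f (A x) - f (A y) ≤ ‖p‖ * C * s - μ / 2 * s ^ 2 := by
    have := hf.add_le_of_hasFDerivAt hd.hasFDerivAt (A y)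
    rw [← map_sub, hstep] at this
    linarith
  calc μ / C ^ 2 * (f (A x) - f (A y)) ≤ μ / C ^ 2 * (‖p‖ * C * s - μ / 2 * s ^ 2) := by gcongr
    _ ≤ 1 / 2 * ‖p‖ ^ 2 := by
      rw [div_mul_eq_mul_div, div_le_iff₀ (by positivity)]
      nlinarith [sq_nonneg (C * ‖p‖ - μ * s)]

theorem stmt_1 {n m : ℕ} (f : EuclideanSpace ℝ (Fin m) → ℝ) (μ : ℝ) (hμ : 0 < μ)
    (hdiff : Differentiable ℝ f) (hsc : StrongConvexOn Set.univ μ f)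
    (A : EuclideanSpace ℝ (Fin n) →ₗ[ℝ] EuclideanSpace ℝ (Fin m))
    (g : EuclideanSpace ℝ (Fin n) → ℝ) (hg : ∀ x, g x = f (A x))
    (hattain : ∃ x₀, ∀ x, g x₀ ≤ g x) :
    ∃ μg > 0, ∀ x, μg * (g x - ⨅ z, g z) ≤ (1/2) * ‖gradient g x‖^2 := by
  obtain rfl : g = fun x ↦ f (A x) := funext hg
  obtain ⟨x₀, hx₀⟩ := hattain
  obtain ⟨C, hC, hA⟩ := A.exists_preimage_norm_le_of_mem_range
  refine ⟨μ / C ^ 2, by positivity, fun x ↦ ?_⟩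
  calc μ / C ^ 2 * (f (A x) - ⨅ z, f (A z)) ≤ μ / C ^ 2 * (f (A x) - f (A x₀)) := by
        gcongr; exact le_ciInf hx₀
    _ ≤ 1 / 2 * ‖gradient (fun z ↦ f (A z)) x‖ ^ 2 :=
        hsc.mul_sub_le_half_norm_gradient_comp_sq hμ hC hA (hdiff _) x₀
end

section
/- Let V : [0,∞) → [0,∞) be a differentiable function satisfying V'(t) ≤ −p V(t)^α − q V(t)^β whenever V(t) > 0, with p, q > 0, 0 < α < 1, β > 1. Then V(t) = 0 for all t ≥ T, where T = 1/(p(1−α)) + 1/(q(β−1)). -/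
open Set Real

/-!
Wherever `V > 0`, the inequality gives `V' ≤ -q V^β`, so `V^(1-β)` grows at rate at least
`q (β - 1)` and `V` drops below `1` within time `1 / (q (β - 1))`; after that `V' ≤ -p V^α`
makes `V^(1-α)` decrease at rate at least `p (1 - α)`, so it would become negative within a
further time `1 / (p (1 - α))`. Since `V` is nonincreasing and nonnegative, it must vanish at
time `T`.
-/

lemma antitoneOn_Ici_of_deriv_nonpos_of_pos {f : ℝ → ℝ} {a : ℝ} (hf : Differentiable ℝ f)
    (hnonneg : ∀ t ≥ a, 0 ≤ f t) (hderiv : ∀ t > a, 0 < f t → deriv f t ≤ 0) :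
    AntitoneOn f (Ici a) := by
  refine antitoneOn_of_deriv_nonpos (convex_Ici a) hf.continuous.continuousOn
    hf.differentiableOn fun t ht => ?_
  rw [interior_Ici] at ht
  rcases (hnonneg t (le_of_lt ht)).lt_or_eq with hpos | hzero
  · exact hderiv t ht hpos
  · have hmin : IsLocalMin f t := by
      filter_upwards [Ioi_mem_nhds ht] with s hs
      exact hzero ▸ hnonneg s (le_of_lt hs)
    exact hmin.deriv_eq_zero.le

lemma hasDerivAt_rpow_one_sub_div {f : ℝ → ℝ} {f' t γ : ℝ} (hf : HasDerivAt f f' t)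
    (hpos : 0 < f t) (hγ : γ ≠ 1) :
    HasDerivAt (fun s => f s ^ (1 - γ) / (1 - γ)) (f t ^ (-γ) * f') t := by
  refine ((hf.rpow_const (p := 1 - γ) (Or.inl hpos.ne')).div_const (1 - γ)).congr_deriv ?_
  rw [sub_sub_cancel_left]
  field_simp [sub_ne_zero.2 hγ.symm]

lemma rpow_neg_mul_le_neg {x y c γ : ℝ} (hx : 0 < x) (hy : y ≤ -c * x ^ γ) :
    x ^ (-γ) * y ≤ -c :=
  calc x ^ (-γ) * y ≤ x ^ (-γ) * (-c * x ^ γ) :=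
        mul_le_mul_of_nonneg_left hy (rpow_nonneg hx.le _)
    _ = -c := by rw [rpow_neg hx.le]; field_simp [(rpow_pos_of_pos hx γ).ne']

section DecayOfPotential

variable {f : ℝ → ℝ} {a b c γ : ℝ}

-- `x ^ (1 - γ) / (1 - γ)` is a primitive of `x ^ (-γ)`.
lemma rpow_one_sub_div_sub_le_of_deriv_le (hγ : γ ≠ 1) (hab : a ≤ b)
    (hf : ∀ t ∈ Icc a b, DifferentiableAt ℝ f t) (hpos : ∀ t ∈ Icc a b, 0 < f t)
    (hderiv : ∀ t ∈ Ioo a b, deriv f t ≤ -c * f t ^ γ) :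
    f b ^ (1 - γ) / (1 - γ) - f a ^ (1 - γ) / (1 - γ) ≤ -c * (b - a) := by
  have hg : ∀ t ∈ Icc a b,
      HasDerivAt (fun s => f s ^ (1 - γ) / (1 - γ)) (f t ^ (-γ) * deriv f t) t :=
    fun t ht => hasDerivAt_rpow_one_sub_div (hf t ht).hasDerivAt (hpos t ht) hγ
  refine (convex_Icc a b).image_sub_le_mul_sub_of_deriv_le
    (fun t ht => (hg t ht).continuousAt.continuousWithinAt)
    (fun t ht => (hg t (interior_subset ht)).differentiableAt.differentiableWithinAt)
    (fun t ht => ?_) a (left_mem_Icc.2 hab) b (right_mem_Icc.2 hab) hab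
  rw [interior_Icc] at ht
  rw [(hg t (Ioo_subset_Icc_self ht)).deriv]
  exact rpow_neg_mul_le_neg (hpos t (Ioo_subset_Icc_self ht)) (hderiv t ht)

lemma rpow_one_sub_le_of_deriv_le_of_lt_one (hγ : γ < 1) (hab : a ≤ b)
    (hf : ∀ t ∈ Icc a b, DifferentiableAt ℝ f t) (hpos : ∀ t ∈ Icc a b, 0 < f t)
    (hderiv : ∀ t ∈ Ioo a b, deriv f t ≤ -c * f t ^ γ) :
    f b ^ (1 - γ) ≤ f a ^ (1 - γ) - c * (1 - γ) * (b - a) := by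
  have h := rpow_one_sub_div_sub_le_of_deriv_le hγ.ne hab hf hpos hderiv
  rw [← sub_div, div_le_iff₀ (sub_pos.2 hγ)] at h
  linarith

lemma rpow_one_sub_ge_of_deriv_le_of_one_lt (hγ : 1 < γ) (hab : a ≤ b)
    (hf : ∀ t ∈ Icc a b, DifferentiableAt ℝ f t) (hpos : ∀ t ∈ Icc a b, 0 < f t)
    (hderiv : ∀ t ∈ Ioo a b, deriv f t ≤ -c * f t ^ γ) :
    f a ^ (1 - γ) + c * (γ - 1) * (b - a) ≤ f b ^ (1 - γ) := by
  have h := rpow_one_sub_div_sub_le_of_deriv_le hγ.ne' hab hf hpos hderiv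
  rw [← sub_div, div_le_iff_of_neg (sub_neg.2 hγ)] at h
  linarith

lemma lt_one_of_deriv_le_of_one_lt (hγ : 1 < γ) (hab : a ≤ b)
    (hf : ∀ t ∈ Icc a b, DifferentiableAt ℝ f t) (hpos : ∀ t ∈ Icc a b, 0 < f t)
    (hderiv : ∀ t ∈ Ioo a b, deriv f t ≤ -c * f t ^ γ)
    (htime : 1 ≤ c * (γ - 1) * (b - a)) : f b < 1 := by
  have h := rpow_one_sub_ge_of_deriv_le_of_one_lt hγ hab hf hpos hderiv
  have hb : 1 < f b ^ (1 - γ) := by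
    linarith [rpow_pos_of_pos (hpos a (left_mem_Icc.2 hab)) (1 - γ)]
  rcases (one_lt_rpow_iff_of_pos (hpos b (right_mem_Icc.2 hab))).1 hb with
    ⟨-, hexp⟩ | ⟨hlt, -⟩
  · linarith
  · exact hlt

lemma mul_sub_lt_one_of_deriv_le_of_lt_one (hγ : γ < 1) (hab : a ≤ b)
    (hf : ∀ t ∈ Icc a b, DifferentiableAt ℝ f t) (hpos : ∀ t ∈ Icc a b, 0 < f t)
    (hderiv : ∀ t ∈ Ioo a b, deriv f t ≤ -c * f t ^ γ) (hfa : f a ≤ 1) :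
    c * (1 - γ) * (b - a) < 1 := by
  have h := rpow_one_sub_le_of_deriv_le_of_lt_one hγ hab hf hpos hderiv
  linarith [rpow_pos_of_pos (hpos b (right_mem_Icc.2 hab)) (1 - γ),
    rpow_le_one (hpos a (left_mem_Icc.2 hab)).le hfa (sub_pos.2 hγ).le]

end DecayOfPotential

theorem stmt_3_general (V : ℝ → ℝ) (p q α β : ℝ)
    (hp : 0 < p) (hq : 0 < q) (hα1 : α < 1) (hβ : 1 < β)
    (hVnn : ∀ t ≥ 0, 0 ≤ V t) (hVdiff : Differentiable ℝ V)
    (hineq : ∀ t ≥ (0:ℝ), 0 < V t → deriv V t ≤ -p * (V t) ^ α - q * (V t) ^ β) :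
    ∀ t ≥ 1 / (p * (1 - α)) + 1 / (q * (β - 1)), V t = 0 := by
  have hpα : 0 < p * (1 - α) := mul_pos hp (sub_pos.2 hα1)
  have hqβ : 0 < q * (β - 1) := mul_pos hq (sub_pos.2 hβ)
  set T₁ := 1 / (q * (β - 1)) with hT₁_def
  set T := 1 / (p * (1 - α)) + T₁ with hT_def
  have hT₁ : 0 ≤ T₁ := by positivity
  have hT₁T : T₁ ≤ T := le_add_of_nonneg_left (by positivity)
  have hanti : AntitoneOn V (Ici 0) := antitoneOn_Ici_of_deriv_nonpos_of_pos hVdiff hVnn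
    fun t ht hVt => (hineq t ht.le hVt).trans
      (by nlinarith [rpow_pos_of_pos hVt α, rpow_pos_of_pos hVt β])
  intro t ht
  have hT : 0 ≤ T := hT₁.trans hT₁T
  suffices hVT : V T = 0 from
    le_antisymm (hVT ▸ hanti hT (hT.trans ht) ht) (hVnn t (hT.trans ht))
  by_contra hVT
  have hpos : ∀ s ∈ Icc 0 T, 0 < V s := fun s hs =>
    ((hVnn T hT).lt_of_ne' hVT).trans_le (hanti hs.1 (hs.1.trans hs.2) hs.2)
  have hdecay : ∀ s ∈ Icc 0 T, deriv V s ≤ -p * V s ^ α ∧ deriv V s ≤ -q * V s ^ β := by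
    intro s hs
    have := hineq s hs.1 (hpos s hs)
    constructor <;> nlinarith [rpow_pos_of_pos (hpos s hs) α, rpow_pos_of_pos (hpos s hs) β]
  have hsub₁ : Icc 0 T₁ ⊆ Icc 0 T := Icc_subset_Icc le_rfl hT₁T
  have hsub₂ : Icc T₁ T ⊆ Icc 0 T := Icc_subset_Icc hT₁ le_rfl
  have hVT₁ : V T₁ < 1 := lt_one_of_deriv_le_of_one_lt hβ hT₁ (fun s _ => hVdiff s)
    (fun s hs => hpos s (hsub₁ hs)) (fun s hs => (hdecay s (hsub₁ (Ioo_subset_Icc_self hs))).2)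
    (by rw [sub_zero, hT₁_def, mul_one_div_cancel hqβ.ne'])
  have hlate := mul_sub_lt_one_of_deriv_le_of_lt_one hα1 hT₁T (fun s _ => hVdiff s)
    (fun s hs => hpos s (hsub₂ hs)) (fun s hs => (hdecay s (hsub₂ (Ioo_subset_Icc_self hs))).1)
    hVT₁.le
  rw [hT_def, add_sub_cancel_right, mul_one_div_cancel hpα.ne'] at hlate
  exact lt_irrefl 1 hlate

theorem stmt_3 (V : ℝ → ℝ) (p q α β : ℝ)
    (hp : 0 < p) (hq : 0 < q) (hα : 0 < α) (hα1 : α < 1) (hβ : 1 < β)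
    (hVnn : ∀ t ≥ 0, 0 ≤ V t) (hVdiff : Differentiable ℝ V)
    (hineq : ∀ t ≥ (0:ℝ), 0 < V t → deriv V t ≤ -p * (V t) ^ α - q * (V t) ^ β) :
    ∀ t ≥ 1 / (p * (1 - α)) + 1 / (q * (β - 1)), V t = 0 :=
  stmt_3_general V p q α β hp hq hα1 hβ hVnn hVdiff hineq
end

section
/- Let V : [0,∞) → [0,∞) be differentiable with V'(t) ≤ −p V(t)^α for all t with V(t) > 0, where p > 0 and 0 < α < 1. Then V(t) = 0 for all t ≥ V(0)^{1−α}/(p(1−α)) (finite-time convergence with settling time depending on the initial condition). -/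
/-!
Since `V ≥ 0` and `V' ≤ 0` wherever `V > 0` (at a zero of `V` it has a minimum, so `V' = 0`
there), `V` is nonincreasing; in particular `V > 0` on `[0, t]` as soon as `V t > 0`. On such an
interval the differential inequality says exactly that `V ^ (1 - α) + p (1 - α) s` is
nonincreasing in `s`, so `p (1 - α) t < V 0 ^ (1 - α)`, i.e. `t` lies before the settling time.
-/

open Set

lemma antitoneOn_Ici_of_deriv_nonpos_of_pos_s4 {V : ℝ → ℝ} {a : ℝ}
    (hcont : ContinuousOn V (Ici a)) (hdiff : DifferentiableOn ℝ V (Ioi a))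
    (hnn : ∀ t ≥ a, 0 ≤ V t) (hderiv : ∀ t > a, 0 < V t → deriv V t ≤ 0) :
    AntitoneOn V (Ici a) := by
  refine antitoneOn_of_deriv_nonpos (convex_Ici a) hcont (by rwa [interior_Ici]) fun t ht => ?_
  rw [interior_Ici] at ht
  rcases (hnn t (le_of_lt ht)).lt_or_eq with hpos | hzero
  · exact hderiv t ht hpos
  · have hmin : IsLocalMin V t :=
      Filter.mem_of_superset (Ioi_mem_nhds ht) fun s hs => hzero ▸ hnn s (le_of_lt hs)
    exact hmin.deriv_eq_zero.le

lemma antitoneOn_rpow_one_sub_add_mul {V : ℝ → ℝ} {p α a b : ℝ} (hα : α ≤ 1)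
    (hcont : ContinuousOn V (Icc a b)) (hdiff : DifferentiableOn ℝ V (Ioo a b))
    (hpos : ∀ x ∈ Icc a b, 0 < V x) (hineq : ∀ x ∈ Ioo a b, deriv V x ≤ -p * V x ^ α) :
    AntitoneOn (fun s => V s ^ (1 - α) + p * (1 - α) * s) (Icc a b) := by
  refine antitoneOn_of_hasDerivWithinAt_nonpos (convex_Icc a b)
    (f' := fun x => deriv V x * (1 - α) * V x ^ (1 - α - 1) + p * (1 - α)) ?_ ?_ ?_
  · exact (hcont.rpow_const fun x hx => Or.inl (hpos x hx).ne').add (by fun_prop)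
  · intro x hx
    rw [interior_Icc] at hx
    have hVx : HasDerivAt V (deriv V x) x :=
      (hdiff.differentiableAt (isOpen_Ioo.mem_nhds hx)).hasDerivAt
    exact ((hVx.rpow_const (Or.inl (hpos x (Ioo_subset_Icc_self hx)).ne')).add
      ((hasDerivAt_id x).const_mul (p * (1 - α)))).hasDerivWithinAt.congr_deriv (by simp)
  · intro x hx
    rw [interior_Icc] at hx
    have hVx : 0 < V x := hpos x (Ioo_subset_Icc_self hx)
    have hcancel : V x ^ α * V x ^ (1 - α - 1) = 1 := by
      rw [← Real.rpow_add hVx, show α + (1 - α - 1) = 0 by ring, Real.rpow_zero]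
    have hfactor : 0 ≤ (1 - α) * V x ^ (1 - α - 1) :=
      mul_nonneg (sub_nonneg.mpr hα) (Real.rpow_pos_of_pos hVx _).le
    calc deriv V x * (1 - α) * V x ^ (1 - α - 1) + p * (1 - α)
        = deriv V x * ((1 - α) * V x ^ (1 - α - 1)) + p * (1 - α) := by ring
      _ ≤ -p * V x ^ α * ((1 - α) * V x ^ (1 - α - 1)) + p * (1 - α) := by
        gcongr; exact hineq x hx
      _ = -(p * (1 - α)) * (V x ^ α * V x ^ (1 - α - 1)) + p * (1 - α) := by ring
      _ = 0 := by rw [hcancel]; ring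

theorem stmt_4_general (V : ℝ → ℝ) (p α : ℝ)
    (hp : 0 < p) (hα1 : α < 1)
    (hVnn : ∀ t ≥ 0, 0 ≤ V t) (hVdiff : Differentiable ℝ V)
    (hineq : ∀ t ≥ (0:ℝ), 0 < V t → deriv V t ≤ -p * (V t) ^ α) :
    ∀ t ≥ (V 0) ^ (1 - α) / (p * (1 - α)), V t = 0 := by
  intro t ht
  have hrate : 0 < p * (1 - α) := mul_pos hp (sub_pos.mpr hα1)
  have ht0 : 0 ≤ t :=
    (div_nonneg (Real.rpow_nonneg (hVnn 0 le_rfl) _) hrate.le).trans ht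
  have hanti : AntitoneOn V (Ici 0) :=
    antitoneOn_Ici_of_deriv_nonpos_of_pos_s4 hVdiff.continuous.continuousOn
      hVdiff.differentiableOn hVnn fun s hs hVs =>
        (hineq s hs.le hVs).trans (by nlinarith [Real.rpow_pos_of_pos hVs α])
  by_contra hne
  have hVt : 0 < V t := (hVnn t ht0).lt_of_ne' hne
  have hpos : ∀ x ∈ Icc 0 t, 0 < V x := fun x hx => hVt.trans_le (hanti hx.1 ht0 hx.2)
  have hdecay := antitoneOn_rpow_one_sub_add_mul hα1.le hVdiff.continuous.continuousOn
    hVdiff.differentiableOn hpos (fun x hx => hineq x hx.1.le (hpos x (Ioo_subset_Icc_self hx)))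
    (left_mem_Icc.mpr ht0) (right_mem_Icc.mpr ht0) ht0
  have hsettle : V 0 ^ (1 - α) ≤ p * (1 - α) * t := (div_le_iff₀' hrate).mp ht
  have hVt_rpow : 0 < V t ^ (1 - α) := Real.rpow_pos_of_pos hVt _
  simp only [mul_zero, add_zero] at hdecay
  linarith

theorem stmt_4 (V : ℝ → ℝ) (p α : ℝ)
    (hp : 0 < p) (hα : 0 < α) (hα1 : α < 1)
    (hVnn : ∀ t ≥ 0, 0 ≤ V t) (hVdiff : Differentiable ℝ V)
    (hineq : ∀ t ≥ (0:ℝ), 0 < V t → deriv V t ≤ -p * (V t) ^ α) :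
    ∀ t ≥ (V 0) ^ (1 - α) / (p * (1 - α)), V t = 0 :=
  stmt_4_general V p α hp hα1 hVnn hVdiff hineq
end

section
/- Let f : ℝⁿ → ℝ be C¹, attain its minimum f* and satisfy the PL inequality with constant μ > 0. Then f satisfies the quadratic growth condition: f(x) − f* ≥ (μ/2) dist(x, X*)², where X* is the set of global minimizers of f (assumed nonempty and closed). -/
/-! Put `g = √(f - f*)`. The PL inequality says exactly that `‖Dg‖ ≥ √(μ/2)` wherever `g > 0`,
so it suffices to show that a continuous `g ≥ 0` whose derivative has norm at least `c` off its
zero set satisfies `c · dist(x, {g = 0}) ≤ g x`. Otherwise pick `σ < c` with `g x < σ d`, where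
`d = dist(x, {g = 0})`, and minimise `g + σ ‖· - x‖` over the closed ball of radius `d` around `x`:
the penalty keeps the minimiser `y` in the open ball, so `g y > 0`, and first-order optimality at
`y` against the `σ`-Lipschitz penalty gives `‖Dg(y)‖ ≤ σ < c`. -/

open Metric Set NNReal

variable {E : Type*} [NormedAddCommGroup E] [NormedSpace ℝ E]

theorem norm_le_of_isLocalMin_add_lipschitzWith {g h : E → ℝ} {L : E →L[ℝ] ℝ} {y : E} {K : ℝ≥0}
    (hmin : IsLocalMin (fun z => g z + h z) y) (hg : HasFDerivAt g L y) (hh : LipschitzWith K h) :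
    ‖L‖ ≤ K := by
  have hdir : ∀ v, -(K * ‖v‖) ≤ L v := by
    intro v
    set φ : ℝ → ℝ := fun t => g (y + t • v) + K * ‖v‖ * t
    have hline : HasDerivAt (fun t : ℝ => y + t • v) v 0 := by
      simpa using ((hasDerivAt_id (0 : ℝ)).smul_const v).const_add y
    have hφ : HasDerivAt φ (L v + K * ‖v‖) 0 := by
      have hg' : HasFDerivAt g L (y + (0 : ℝ) • v) := by simpa using hg
      have := (hg'.comp_hasDerivAt 0 hline).add ((hasDerivAt_id 0).const_mul (K * ‖v‖))
      rwa [mul_one] at this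
    have hφmin : IsLocalMinOn φ (Ici 0) 0 := by
      have hmin' : IsLocalMin ((fun z => g z + h z) ∘ fun t : ℝ => y + t • v) 0 :=
        (by simpa using hmin : IsLocalMin _ (y + (0 : ℝ) • v)).comp_continuous
          (g := fun t : ℝ => y + t • v) hline.continuousAt
      filter_upwards [hmin'.filter_mono nhdsWithin_le_nhds, self_mem_nhdsWithin]
        with t ht (ht0 : 0 ≤ t)
      have hlip : h (y + t • v) - h y ≤ K * (t * ‖v‖) := by
        simpa [dist_eq_norm, norm_smul, abs_of_nonneg ht0] using
          (le_abs_self _).trans (hh.dist_le_mul (y + t • v) y)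
      simp only [φ, Function.comp_apply, zero_smul, add_zero, mul_zero] at ht ⊢
      linarith
    have := hφmin.hasFDerivWithinAt_nonneg hφ.hasFDerivAt.hasFDerivWithinAt (y := 1)
      (mem_posTangentConeAt_of_segment_subset (by simp [segment_eq_Icc, Icc_subset_Ici_self]))
    simpa [← neg_le_iff_add_nonneg] using this
  refine ContinuousLinearMap.opNorm_le_bound _ K.2 fun v => abs_le.2 ⟨hdir v, ?_⟩
  simpa using hdir (-v)

theorem mul_infDist_le_of_le_norm_fderiv [ProperSpace E] {g : E → ℝ} {c : ℝ}
    (hg : Continuous g) (hg0 : ∀ y, 0 ≤ g y)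
    (hslope : ∀ y, 0 < g y → ∃ L : E →L[ℝ] ℝ, HasFDerivAt g L y ∧ c ≤ ‖L‖) (x : E) :
    c * infDist x {y | g y = 0} ≤ g x := by
  set d := infDist x {y | g y = 0}
  by_contra! hlt
  have hd : 0 < d := (show 0 ≤ d from infDist_nonneg).lt_of_ne fun h => by
    rw [← h, mul_zero] at hlt
    exact (hg0 x).not_gt hlt
  obtain ⟨σ, hxσ, hσc⟩ := exists_between ((div_lt_iff₀ hd).2 hlt)
  lift σ to ℝ≥0 using (div_nonneg (hg0 x) hd.le).trans hxσ.le
  obtain ⟨y, hy, hymin⟩ := (isCompact_closedBall x d).exists_isMinOn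
    (f := fun z => g z + σ * dist z x) (nonempty_closedBall.2 hd.le) (by fun_prop)
  have hyx : dist y x < d := by
    have := hymin (mem_closedBall_self hd.le)
    simp only [mem_ofPred_eq, dist_self, mul_zero, add_zero] at this
    have := (div_lt_iff₀ hd).1 hxσ
    nlinarith [hg0 y]
  have hgy : 0 < g y := (hg0 y).lt_of_ne fun h =>
    (infDist_le_dist_of_mem (x := x) (h.symm : y ∈ {y | g y = 0})).not_gt (dist_comm x y ▸ hyx)
  obtain ⟨L, hL, hcL⟩ := hslope y hgy
  have hloc : IsLocalMin (fun z => g z + σ * dist z x) y :=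
    hymin.isLocalMin (Filter.mem_of_superset (isOpen_ball.mem_nhds hyx) ball_subset_closedBall)
  have hlip : LipschitzWith σ fun z => (σ : ℝ) * dist z x := by
    simpa [Function.comp_def] using (lipschitzWith_smul (σ : ℝ)).comp (LipschitzWith.dist_left x)
  linarith [norm_le_of_isLocalMin_add_lipschitzWith hloc hL hlip]

theorem sqrt_half_le_norm_smul_of_mul_le_half_sq_norm {u μ : ℝ} {L : E →L[ℝ] ℝ} (hu : 0 < u)
    (hPL : μ * u ≤ 1 / 2 * ‖L‖ ^ 2) : √(μ / 2) ≤ ‖(1 / (2 * √u)) • L‖ := by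
  rw [norm_smul, Real.norm_of_nonneg (by positivity), Real.sqrt_le_left (by positivity),
    mul_pow, div_pow, mul_pow, Real.sq_sqrt hu.le, div_le_iff₀ two_pos]
  field_simp
  nlinarith

theorem stmt_14_general {n : ℕ} (f : EuclideanSpace ℝ (Fin n) → ℝ) (fstar : ℝ) (μ : ℝ)
    (hf : ContDiff ℝ 1 f) (hμ : 0 < μ)
    (hlb : ∀ x, fstar ≤ f x)
    (hPL : ∀ x, μ * (f x - fstar) ≤ (1/2) * ‖gradient f x‖^2)
    (Xstar : Set (EuclideanSpace ℝ (Fin n))) (hXstar : Xstar = {x | f x = fstar}) :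
    ∀ x, (μ / 2) * (Metric.infDist x Xstar)^2 ≤ f x - fstar := by
  intro x
  have hzero : {y | √(f y - fstar) = 0} = Xstar := by
    ext y
    simp [hXstar, Real.sqrt_eq_zero', (hlb y).ge_iff_eq']
  have hslope : ∀ y, 0 < √(f y - fstar) → ∃ L : _ →L[ℝ] ℝ,
      HasFDerivAt (fun y => √(f y - fstar)) L y ∧ √(μ / 2) ≤ ‖L‖ := by
    intro y hy
    have hfy : 0 < f y - fstar := Real.sqrt_pos.1 hy
    have hnorm : ‖gradient f y‖ = ‖fderiv ℝ f y‖ := by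
      rw [← toDual_gradient, LinearIsometryEquiv.norm_map]
    exact ⟨_, ((hf.differentiable one_ne_zero y).hasFDerivAt.sub_const fstar).sqrt hfy.ne',
      sqrt_half_le_norm_smul_of_mul_le_half_sq_norm hfy (hnorm ▸ hPL y)⟩
  have hbound := mul_infDist_le_of_le_norm_fderiv (by fun_prop) (fun _ => Real.sqrt_nonneg _)
    hslope x
  rw [hzero] at hbound
  calc μ / 2 * infDist x Xstar ^ 2 = (√(μ / 2) * infDist x Xstar) ^ 2 := by
        rw [mul_pow, Real.sq_sqrt (by positivity)]
    _ ≤ √(f x - fstar) ^ 2 := by gcongr; exact mul_nonneg (Real.sqrt_nonneg _) infDist_nonneg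
    _ = f x - fstar := Real.sq_sqrt (sub_nonneg.2 (hlb x))

theorem stmt_14 {n : ℕ} (f : EuclideanSpace ℝ (Fin n) → ℝ) (fstar : ℝ) (μ : ℝ)
    (hf : ContDiff ℝ 1 f) (hμ : 0 < μ)
    (hmin : ∃ x₀, f x₀ = fstar) (hlb : ∀ x, fstar ≤ f x)
    (hPL : ∀ x, μ * (f x - fstar) ≤ (1/2) * ‖gradient f x‖^2)
    (Xstar : Set (EuclideanSpace ℝ (Fin n))) (hXstar : Xstar = {x | f x = fstar})
    (hclosed : IsClosed Xstar) :
    ∀ x, (μ / 2) * (Metric.infDist x Xstar)^2 ≤ f x - fstar :=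
  stmt_14_general f fstar μ hf hμ hlb hPL Xstar hXstar
end

section
/- Let F : ℝⁿ × ℝᵐ → ℝ be C¹, satisfy the two-sided PL inequality with constants μ₁, μ₂, and suppose the mixed Lipschitz bound ‖∇_x F(x,y) − ∇_x F(x,y')‖ ≤ c‖y − y'‖ and ‖∇_y F(x,y) − ∇_y F(x',y)‖ ≤ c‖x − x'‖ hold with 0 ≤ c < min{μ₁/2, μ₂/2}. Then along the saddle-point dynamics ẋ = −∇_x F, ẏ = ∇_y F, the function V(x,y) = 2(max_{y'}F(x,y') − min_{x'}F(x',y)) satisfies d/dt V(x(t),y(t)) ≤ −(1 − 2c/μ)‖∇F(x(t),y(t))‖², where μ = min{μ₁, μ₂}. -/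
/-!
Write `Φ x = max_y F x y` and `Ψ y = min_x F x y`, so that along the flow
`d/dt V = -2 (⟪∇Φ x, ∇ₓF⟫ + ⟪∇Ψ y, ∇_y F⟫)`. The PL inequality yields an error bound: a minimizer
`w` of `√(f - min f) + κ ‖· - b‖²` (which exists by coercivity, the space being proper) satisfies
a first-order condition that, for the right `κ`, contradicts PL unless `f w = min f`; hence some
minimizer `q` of `F · y` lies within `2 ‖∇ₓF‖ / μ` of `x`. Since `F q ·` touches `Ψ` from above
at `y`, `∇Ψ y = ∇_y F q y`, and the cross-Lipschitz bound puts it within `(2c/μ) ‖∇ₓF‖` of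
`∇_y F x y`; symmetrically for `Φ`. Cauchy–Schwarz then gives `d/dt V ≤ -2 (1 - 2c/μ) ‖∇F‖²`.
-/

open Filter
open scoped RealInnerProductSpace

variable {E E' : Type*} [NormedAddCommGroup E] [InnerProductSpace ℝ E]
  [NormedAddCommGroup E'] [InnerProductSpace ℝ E']

section Gradient

variable [CompleteSpace E] {f f₁ f₂ : E → ℝ} {G G₁ G₂ x : E}

theorem gradient_fun_neg : gradient (fun z => -f z) x = -gradient f x := by
  simp [gradient, fderiv_fun_neg]

theorem HasGradientAt.fun_neg (h : HasGradientAt f G x) : HasGradientAt (fun z => -f z) (-G) x := by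
  rw [hasGradientAt_iff_hasFDerivAt, map_neg]
  exact h.hasFDerivAt.neg

theorem HasGradientAt.comp_hasDerivAt {γ : ℝ → E} {v : E} {t : ℝ} (hf : HasGradientAt f G (γ t))
    (hγ : HasDerivAt γ v t) : HasDerivAt (fun s => f (γ s)) ⟪G, v⟫ t := by
  have h : HasDerivAt (fun s => f (γ s)) (InnerProductSpace.toDual ℝ E G v) t :=
    hf.hasFDerivAt.comp_hasDerivAt t hγ
  rwa [InnerProductSpace.toDual_apply_apply] at h

theorem HasGradientAt.eq_of_le_of_eq (h₁ : HasGradientAt f₁ G₁ x) (h₂ : HasGradientAt f₂ G₂ x)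
    (hle : ∀ z, f₁ z ≤ f₂ z) (heq : f₁ x = f₂ x) : G₁ = G₂ := by
  have hmin : IsLocalMin (fun z => f₂ z - f₁ z) x :=
    .of_forall fun z => by simp only [heq, sub_self, sub_nonneg, hle z]
  have h0 := hmin.hasFDerivAt_eq_zero (h₂.hasFDerivAt.sub h₁.hasFDerivAt)
  exact (InnerProductSpace.toDual ℝ E).injective (sub_eq_zero.mp h0).symm

end Gradient

theorem mul_add_sq_le_inner_add_inner {u U : E} {v V : E'} {r : ℝ} (hr : 0 ≤ r)
    (hu : ‖u - U‖ ≤ r * ‖v‖) (hv : ‖v - V‖ ≤ r * ‖u‖) :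
    (1 - r) * (‖u‖ ^ 2 + ‖v‖ ^ 2) ≤ ⟪U, u⟫ + ⟪V, v⟫ := by
  have hU : ‖u‖ ^ 2 - r * ‖v‖ * ‖u‖ ≤ ⟪U, u⟫ := by
    have := (le_abs_self _).trans (abs_real_inner_le_norm (u - U) u)
    rw [inner_sub_left, real_inner_self_eq_norm_sq] at this
    nlinarith [mul_le_mul_of_nonneg_right hu (norm_nonneg u)]
  have hV : ‖v‖ ^ 2 - r * ‖u‖ * ‖v‖ ≤ ⟪V, v⟫ := by
    have := (le_abs_self _).trans (abs_real_inner_le_norm (v - V) v)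
    rw [inner_sub_left, real_inner_self_eq_norm_sq] at this
    nlinarith [mul_le_mul_of_nonneg_right hv (norm_nonneg v)]
  nlinarith [mul_nonneg hr (sq_nonneg (‖u‖ - ‖v‖))]

section PolyakLojasiewicz

variable [ProperSpace E]

theorem norm_gradient_le_of_forall_sqrt_add_sq_le {f : E → ℝ} {m κ : ℝ} {b w : E}
    (hκ : 0 ≤ κ) (hf : DifferentiableAt ℝ f w) (hw : m < f w)
    (hmin : ∀ z, √(f w - m) + κ * ‖w - b‖ ^ 2 ≤ √(f z - m) + κ * ‖z - b‖ ^ 2) :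
    ‖gradient f w‖ ≤ 4 * κ * √(f w - m) * ‖w - b‖ := by
  set G := gradient f w
  have he : 0 < √(f w - m) := Real.sqrt_pos.mpr (sub_pos.mpr hw)
  have hD := ((hf.hasFDerivAt.sub_const m).sqrt (sub_pos.mpr hw).ne').add
    (((hasFDerivAt_id w).sub_const b).norm_sq.const_mul κ)
  have hloc : IsLocalMin (fun z => √(f z - m) + κ * ‖z - b‖ ^ 2) w := Eventually.of_forall hmin
  have hzero := congrArg (· G) (hloc.hasFDerivAt_eq_zero hD)
  have hGG : fderiv ℝ f w G = ‖G‖ ^ 2 := by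
    rw [← inner_gradient_left, real_inner_self_eq_norm_sq]
  simp only [add_apply, smul_apply, hGG, ContinuousLinearMap.comp_apply, innerSL_apply_apply, id,
    ContinuousLinearMap.id_apply, zero_apply, smul_eq_mul, two_smul] at hzero
  have hnorm_sq : ‖G‖ ^ 2 = -(4 * κ * √(f w - m) * ⟪w - b, G⟫) := by
    field_simp at hzero
    linarith
  have hCS : -⟪w - b, G⟫ ≤ ‖w - b‖ * ‖G‖ := (neg_le_abs _).trans (abs_real_inner_le_norm _ _)
  have hK : 0 ≤ 4 * κ * √(f w - m) * ‖w - b‖ := by positivity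
  have : ‖G‖ * ‖G‖ ≤ 4 * κ * √(f w - m) * ‖w - b‖ * ‖G‖ := by
    rw [← sq, hnorm_sq]; nlinarith [mul_nonneg hκ he.le]
  rcases (norm_nonneg G).eq_or_lt with h0 | hpos
  · rw [← h0]; exact hK
  · exact le_of_mul_le_mul_right this hpos

theorem exists_eq_norm_sub_le_of_polyakLojasiewicz {f : E → ℝ} {m μ : ℝ} (hμ : 0 < μ)
    (hf : Differentiable ℝ f) (hm : ∀ z, m ≤ f z)
    (hPL : ∀ z, 2 * μ * (f z - m) ≤ ‖gradient f z‖ ^ 2) (b : E) :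
    ∃ p, f p = m ∧ ‖b - p‖ ≤ 2 * ‖gradient f b‖ / μ := by
  rcases (hm b).eq_or_lt with hb | hb
  · exact ⟨b, hb.symm, by simp only [sub_self, norm_zero]; positivity⟩
  set s := √(f b - m)
  have hs : 0 < s := Real.sqrt_pos.mpr (sub_pos.mpr hb)
  -- For this `κ`, at a minimizer `w` with `m < f w` PL forces `μ ≤ 8κ²‖w - b‖² < 8κs = μ`.
  set κ := μ / (8 * s)
  have hκ : 0 < κ := by positivity
  have hκs : 8 * κ * s = μ := by simp only [κ]; field_simp
  obtain ⟨w, hw⟩ : ∃ w, ∀ z, √(f w - m) + κ * ‖w - b‖ ^ 2 ≤ √(f z - m) + κ * ‖z - b‖ ^ 2 := by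
    have hdist := tendsto_dist_right_cocompact_atTop b
    simp only [dist_eq_norm] at hdist
    have := hf.continuous
    refine Continuous.exists_forall_le (by fun_prop) ?_
    exact tendsto_atTop_add_left_of_le' _ 0 (.of_forall fun z => Real.sqrt_nonneg _)
      (((tendsto_pow_atTop two_ne_zero).comp hdist).const_mul_atTop hκ)
  have hwb : √(f w - m) + κ * ‖w - b‖ ^ 2 ≤ s := by simpa using hw b
  have hfw : f w = m := by
    by_contra hne
    have hlt : m < f w := lt_of_le_of_ne (hm w) (Ne.symm hne)
    have he : 0 < √(f w - m) := Real.sqrt_pos.mpr (sub_pos.mpr hlt)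
    have hG := pow_le_pow_left₀ (norm_nonneg _)
      (norm_gradient_le_of_forall_sqrt_add_sq_le hκ.le (hf w) hlt hw) 2
    have hG' : 2 * μ * √(f w - m) ^ 2 ≤ 16 * κ ^ 2 * ‖w - b‖ ^ 2 * √(f w - m) ^ 2 := by
      rw [mul_pow, mul_pow, Real.sq_sqrt (sub_pos.mpr hlt).le] at hG
      rw [Real.sq_sqrt (sub_pos.mpr hlt).le]
      linarith [hPL w]
    have hμle : μ ≤ 8 * κ * (κ * ‖w - b‖ ^ 2) := by nlinarith [pow_pos he 2]
    nlinarith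
  refine ⟨w, hfw, ?_⟩
  have hd : ‖b - w‖ ^ 2 ≤ (2 * ‖gradient f b‖ / μ) ^ 2 := by
    rw [hfw, sub_self, Real.sqrt_zero, zero_add] at hwb
    have : ‖b - w‖ ^ 2 * μ ≤ 8 * (f b - m) := by
      rw [norm_sub_rev, ← Real.sq_sqrt (sub_pos.mpr hb).le, ← hκs]
      nlinarith
    rw [div_pow, le_div_iff₀ (by positivity)]
    nlinarith [hPL b]
  exact (pow_le_pow_iff_left₀ (norm_nonneg _) (by positivity) two_ne_zero).mp hd

theorem norm_gradient_sub_le_of_polyakLojasiewicz [CompleteSpace E'] {F : E → E' → ℝ}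
    {g : E' → ℝ} {G : E'} {μ c : ℝ} {a : E} {b : E'} (hμ : 0 < μ) (hc : 0 ≤ c)
    (hdx : Differentiable ℝ (F · b)) (hdy : ∀ x, DifferentiableAt ℝ (F x ·) b)
    (hg : ∀ y x, g y ≤ F x y) (hPL : ∀ x, 2 * μ * (F x b - g b) ≤ ‖gradient (F · b) x‖ ^ 2)
    (hLip : ∀ x, ‖gradient (F a ·) b - gradient (F x ·) b‖ ≤ c * ‖a - x‖)
    (hG : HasGradientAt g G b) :
    ‖gradient (F a ·) b - G‖ ≤ 2 * c / μ * ‖gradient (F · b) a‖ := by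
  obtain ⟨q, hq, hqa⟩ := exists_eq_norm_sub_le_of_polyakLojasiewicz hμ hdx (hg b) hPL a
  have hGq : G = gradient (F q ·) b := hG.eq_of_le_of_eq (hdy q).hasGradientAt (hg · q) hq.symm
  calc ‖gradient (F a ·) b - G‖ ≤ c * ‖a - q‖ := hGq ▸ hLip q
    _ ≤ c * (2 * ‖gradient (F · b) a‖ / μ) := by gcongr
    _ = 2 * c / μ * ‖gradient (F · b) a‖ := by ring

end PolyakLojasiewicz

theorem stmt_17 {n m : ℕ} (F : EuclideanSpace ℝ (Fin n) → EuclideanSpace ℝ (Fin m) → ℝ)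
    (μ₁ μ₂ c : ℝ) (hμ₁ : 0 < μ₁) (hμ₂ : 0 < μ₂) (hc : 0 ≤ c)
    (hcsmall : 2 * c < min μ₁ μ₂)
    (hF : ContDiff ℝ 1 (fun p : EuclideanSpace ℝ (Fin n) × EuclideanSpace ℝ (Fin m) => F p.1 p.2))
    (xbar : EuclideanSpace ℝ (Fin m) → EuclideanSpace ℝ (Fin n))
    (ybar : EuclideanSpace ℝ (Fin n) → EuclideanSpace ℝ (Fin m))
    (hxbar : ∀ y x, F (xbar y) y ≤ F x y)
    (hybar : ∀ x y, F x y ≤ F x (ybar x))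
    (hPL₁ : ∀ x y, 2 * μ₁ * (F x y - F (xbar y) y) ≤ ‖gradient (fun x' => F x' y) x‖^2)
    (hPL₂ : ∀ x y, 2 * μ₂ * (F x (ybar x) - F x y) ≤ ‖gradient (fun y' => F x y') y‖^2)
    (hLipx : ∀ x y y', ‖gradient (fun x' => F x' y) x - gradient (fun x' => F x' y') x‖ ≤ c * ‖y - y'‖)
    (hLipy : ∀ y x x', ‖gradient (fun y' => F x y') y - gradient (fun y' => F x' y') y‖ ≤ c * ‖x - x'‖)
    (hDanskin₁ : ∀ x, HasGradientAt (fun x' => F x' (ybar x')) (gradient (fun x' => F x' (ybar x)) x) x)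
    (hDanskin₂ : ∀ y, HasGradientAt (fun y' => F (xbar y') y') (gradient (fun y' => F (xbar y) y') y) y)
    (x : ℝ → EuclideanSpace ℝ (Fin n)) (y : ℝ → EuclideanSpace ℝ (Fin m))
    (hx : ∀ t, HasDerivAt x (-(gradient (fun x' => F x' (y t)) (x t))) t)
    (hy : ∀ t, HasDerivAt y (gradient (fun y' => F (x t) y') (y t)) t)
    (V : EuclideanSpace ℝ (Fin n) → EuclideanSpace ℝ (Fin m) → ℝ)
    (hV : ∀ x' y', V x' y' = 2 * (F x' (ybar x') - F (xbar y') y')) :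
    ∀ t, deriv (fun s => V (x s) (y s)) t ≤
      -(1 - 2 * c / min μ₁ μ₂) *
        (‖gradient (fun x' => F x' (y t)) (x t)‖^2 +
         ‖gradient (fun y' => F (x t) y') (y t)‖^2) := by
  intro t
  set μ := min μ₁ μ₂
  have hμ : 0 < μ := lt_min hμ₁ hμ₂
  have hFd := hF.differentiable one_ne_zero
  have hdx : ∀ y, Differentiable ℝ (F · y) := fun y =>
    hFd.comp (differentiable_id.prodMk (differentiable_const y))
  have hdy : ∀ x, Differentiable ℝ (F x ·) := fun x =>
    hFd.comp ((differentiable_const x).prodMk differentiable_id)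
  have hGy := norm_gradient_sub_le_of_polyakLojasiewicz hμ₁ hc (hdx (y t)) (fun x => hdy x (y t))
    hxbar (hPL₁ · (y t)) (hLipy (y t) (x t)) (hDanskin₂ (y t))
  -- `-Φ` is the value function of minimizing `(y, x) ↦ -F x y` over `y`.
  have hGx := norm_gradient_sub_le_of_polyakLojasiewicz (F := fun y x => -F x y) hμ₂ hc
    (hdy (x t)).neg (fun y => (hdx y (x t)).neg) (fun x y => neg_le_neg (hybar x y))
    (fun y' => by simpa only [gradient_fun_neg, norm_neg, neg_sub_neg] using hPL₂ (x t) y')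
    (fun y' => by simpa only [gradient_fun_neg, neg_sub_neg, norm_sub_rev] using hLipx (x t) y' (y t))
    (hDanskin₁ (x t)).fun_neg
  simp only [gradient_fun_neg, norm_neg, sub_neg_eq_add, neg_add_eq_sub] at hGx
  rw [norm_sub_rev] at hGx
  set gx := gradient (fun x' => F x' (y t)) (x t)
  set gy := gradient (fun y' => F (x t) y') (y t)
  have hD : HasDerivAt (fun s => V (x s) (y s)) (-2 * (⟪gradient (fun x' => F x' (ybar (x t))) (x t), gx⟫
      + ⟪gradient (fun y' => F (xbar (y t)) y') (y t), gy⟫)) t := by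
    simp only [hV]
    refine ((((hDanskin₁ (x t)).comp_hasDerivAt (hx t)).sub
      ((hDanskin₂ (y t)).comp_hasDerivAt (hy t))).const_mul 2).congr_deriv ?_
    rw [inner_neg_right]
    ring
  rw [hD.deriv]
  have hr : 2 * c / μ ≤ 1 := (div_le_one hμ).mpr hcsmall.le
  have hdecay := mul_add_sq_le_inner_add_inner (r := 2 * c / μ) (by positivity)
    (hGx.trans (by gcongr; exact min_le_right _ _)) (hGy.trans (by gcongr; exact min_le_left _ _))
  have hS : 0 ≤ (1 - 2 * c / μ) * (‖gx‖ ^ 2 + ‖gy‖ ^ 2) := by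
    have := sub_nonneg.mpr hr
    positivity
  linarith
end

section
/- Let f : ℝⁿ → ℝ be C¹, bounded below with infimum f* attained, and satisfy the PL inequality with constant μ > 0. Let x(t) solve the normalized gradient flow ẋ = −∇f(x)/‖∇f(x)‖^{(p−2)/(p−1)} with 1 < p < 2, away from critical points. Then V(t) := f(x(t)) − f* satisfies V'(t) ≤ −(2μ)^{b} V(t)^{b} with b = (2 − (p−2)/(p−1))/2 > 1. -/
/-!
Along the flow, the chain rule gives `V' = ⟪∇f, ẋ⟫ = -‖∇f‖ ^ (2 - α)` with `α = (p - 2)/(p - 1)`.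
Since `2 - α = 2b` with `b = p / (2(p - 1)) > 0`, raising the PL inequality `2μ V ≤ ‖∇f‖²` to the
power `b` bounds `‖∇f‖ ^ (2 - α)` from below by `(2μ)^b V^b`.
-/

open Real

theorem hasDerivAt_comp_of_hasDerivAt_eq_neg_smul_gradient {E : Type*} [NormedAddCommGroup E]
    [InnerProductSpace ℝ E] [CompleteSpace E] {f : E → ℝ} {x : ℝ → E} {α t : ℝ}
    (hf : DifferentiableAt ℝ f (x t)) (hg : gradient f (x t) ≠ 0)
    (hx : HasDerivAt x (-(‖gradient f (x t)‖ ^ α)⁻¹ • gradient f (x t)) t) :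
    HasDerivAt (fun s => f (x s)) (-‖gradient f (x t)‖ ^ (2 - α)) t := by
  have hpos : 0 < ‖gradient f (x t)‖ := norm_pos_iff.mpr hg
  have hcomp := hf.hasGradientAt.hasFDerivAt.comp_hasDerivAt t hx
  simp only [InnerProductSpace.toDual_apply_apply, real_inner_smul_right,
    real_inner_self_eq_norm_sq] at hcomp
  refine hcomp.congr_deriv ?_
  rw [rpow_sub hpos, rpow_two]
  field_simp

theorem mul_rpow_le_rpow_two_mul_of_mul_le_sq {c V r b : ℝ} (hc : 0 ≤ c) (hV : 0 ≤ V)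
    (hr : 0 ≤ r) (hb : 0 ≤ b) (h : c * V ≤ r ^ 2) : c ^ b * V ^ b ≤ r ^ (2 * b) := by
  rw [← mul_rpow hc hV, rpow_mul hr, rpow_two]
  exact rpow_le_rpow (mul_nonneg hc hV) h hb

theorem two_sub_div_sub_one_pos {p : ℝ} (hp : 1 < p) : 0 < 2 - (p - 2) / (p - 1) := by
  have hp' : 0 < p - 1 := by linarith
  have : 2 - (p - 2) / (p - 1) = p / (p - 1) := by field_simp; ring
  rw [this]
  exact div_pos (by linarith) hp'

theorem stmt_19_general {n : ℕ} (f : EuclideanSpace ℝ (Fin n) → ℝ) (fstar : ℝ) (μ p : ℝ)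
    (hf : ContDiff ℝ 1 f) (hμ : 0 < μ) (hp1 : 1 < p)
    (hlb : ∀ x, fstar ≤ f x)
    (hPL : ∀ x, μ * (f x - fstar) ≤ (1/2) * ‖gradient f x‖^2)
    (x : ℝ → EuclideanSpace ℝ (Fin n))
    (hne : ∀ t, gradient f (x t) ≠ 0)
    (hx : ∀ t, HasDerivAt x
      (-(‖gradient f (x t)‖ ^ ((p - 2)/(p - 1)))⁻¹ • gradient f (x t)) t) :
    ∀ t, deriv (fun s => f (x s) - fstar) t ≤
      -((2 * μ) ^ ((2 - (p - 2)/(p - 1))/2)) *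
        (f (x t) - fstar) ^ ((2 - (p - 2)/(p - 1))/2) := by
  intro t
  have hderiv := (hasDerivAt_comp_of_hasDerivAt_eq_neg_smul_gradient
    (hf.differentiable one_ne_zero (x t)) (hne t) (hx t)).sub_const fstar
  have hpow := mul_rpow_le_rpow_two_mul_of_mul_le_sq (by positivity)
    (sub_nonneg.mpr (hlb (x t))) (norm_nonneg _) (half_pos (two_sub_div_sub_one_pos hp1)).le
    (show 2 * μ * (f (x t) - fstar) ≤ ‖gradient f (x t)‖ ^ 2 by linarith [hPL (x t)])
  rw [hderiv.deriv, neg_mul, neg_le_neg_iff]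
  convert hpow using 2
  ring

theorem stmt_19 {n : ℕ} (f : EuclideanSpace ℝ (Fin n) → ℝ) (fstar : ℝ) (μ p : ℝ)
    (hf : ContDiff ℝ 1 f) (hμ : 0 < μ) (hp1 : 1 < p) (hp2 : p < 2)
    (hmin : ∃ x₀, f x₀ = fstar) (hlb : ∀ x, fstar ≤ f x)
    (hPL : ∀ x, μ * (f x - fstar) ≤ (1/2) * ‖gradient f x‖^2)
    (x : ℝ → EuclideanSpace ℝ (Fin n))
    (hne : ∀ t, gradient f (x t) ≠ 0)
    (hx : ∀ t, HasDerivAt x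
      (-(‖gradient f (x t)‖ ^ ((p - 2)/(p - 1)))⁻¹ • gradient f (x t)) t) :
    ∀ t, deriv (fun s => f (x s) - fstar) t ≤
      -((2 * μ) ^ ((2 - (p - 2)/(p - 1))/2)) *
        (f (x t) - fstar) ^ ((2 - (p - 2)/(p - 1))/2) :=
  stmt_19_general f fstar μ p hf hμ hp1 hlb hPL x hne hx
end
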